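/- Let q > 0 and define the quasiconvex PAR Ψ : ℝ → ℝ as follows: for x ∈ ℝ, letting k = ⌊|x|/q⌋ ∈ ℕ, set Ψ(x) = |x| − kq/2 if kq ≤ |x| ≤ (2k+1)q/2, and Ψ(x) = (k+1)q/2 if (2k+1)q/2 ≤ |x| ≤ (k+1)q. Fix λ with 0 < λ ≤ q, fix x ∈ ℝ, and let Φ(z) = λΨ(z) + (1/2)(z − x)². Then for every k ∈ ℕ: (i) if kq ≤ |x| ≤ kq + λ, then z = sign(x)·kq is a global minimizer of Φ over ℝ; (ii) if kq + λ ≤ |x| ≤ (2k+1)q/2 + λ/2, then z = sign(x)·(|x| − λ) is a global minimizer of Φ over ℝ; (iii) if (2k+1)q/2 + λ/2 ≤ |x| ≤ (k+1)q, then z = x is a global minimizer of Φ over ℝ. -/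

import Mathlib

/-!
For `t ≥ 0`, `Ψ t` is the minimum over `j : ℕ` of the convex functions
`h_j t = max (j q / 2) (t - j q / 2)`, and `|z - x| ≥ ||z| - |x||`; hence `Φ z` is bounded below by
`λ h_j |z| + ½ (|z| - |x|)²` for some `j`. Writing `s = |x|`, the proximal objective
`λ h_j t + ½ (t - s)²` is at least `λ j q / 2` (as `h_j ≥ j q / 2`), at least
`λ (s - j q / 2) - λ² / 2` (as `h_j t ≥ t - j q / 2`, completing the square), and at least
`λ j q / 2 + ½ (s - j q)²` when `j q ≤ s ≤ j q + λ`. The candidate minimizer of each regime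
attains one of these values for `j = k` (or `j = k + 1` in regime (iii)), and since the first
bound increases and the second decreases in `j`, the same value bounds every other `h_j`.
-/

/-- The quasiconvex piecewise-affine regularizer with uniformly spaced quantization
values `Q = {0, ±q, ±2q, …}`: with `k = ⌊|x|/q⌋`, it equals `|x| − kq/2` on
`[kq, (2k+1)q/2]` and `(k+1)q/2` on `[(2k+1)q/2, (k+1)q]`. -/
noncomputable def quasiconvexPAR (q : ℝ) (x : ℝ) : ℝ :=
  if |x| ≤ (2 * (⌊|x| / q⌋₊ : ℝ) + 1) * q / 2 then
    |x| - (⌊|x| / q⌋₊ : ℝ) * q / 2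
  else
    ((⌊|x| / q⌋₊ : ℝ) + 1) * q / 2

lemma Nat.floor_div_eq_of_le_of_lt {K : Type*} [Field K] [LinearOrder K] [IsStrictOrderedRing K]
    [FloorSemiring K] {q t : K} (hq : 0 < q) {k : ℕ} (h₁ : k * q ≤ t) (h₂ : t < (k + 1) * q) :
    ⌊t / q⌋₊ = k :=
  Nat.floor_eq_on_Ico k (t / q) ⟨(le_div_iff₀ hq).2 h₁, (div_lt_iff₀ hq).2 h₂⟩

section QuasiconvexPAR

variable {q : ℝ}

lemma quasiconvexPAR_eq_abs_sub (hq : 0 < q) {k : ℕ} {z : ℝ} (h₁ : k * q ≤ |z|)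
    (h₂ : |z| ≤ (2 * k + 1) * q / 2) : quasiconvexPAR q z = |z| - k * q / 2 := by
  rw [quasiconvexPAR, Nat.floor_div_eq_of_le_of_lt hq h₁ (by linarith), if_pos h₂]

lemma quasiconvexPAR_eq_const (hq : 0 < q) {k : ℕ} {z : ℝ} (h₁ : (2 * k + 1) * q / 2 ≤ |z|)
    (h₂ : |z| ≤ (k + 1) * q) : quasiconvexPAR q z = (k + 1) * q / 2 := by
  rcases h₂.lt_or_eq with h₂ | h₂
  · rw [quasiconvexPAR, Nat.floor_div_eq_of_le_of_lt hq (by linarith) h₂]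
    split_ifs <;> linarith
  · rw [quasiconvexPAR_eq_abs_sub (k := k + 1) hq (by push_cast; linarith) (by push_cast; linarith)]
    push_cast
    linarith

lemma exists_max_le_quasiconvexPAR (hq : 0 < q) (z : ℝ) :
    ∃ j : ℕ, max (j * q / 2) (|z| - j * q / 2) ≤ quasiconvexPAR q z := by
  set m := ⌊|z| / q⌋₊
  have hm : m * q ≤ |z| := (le_div_iff₀ hq).1 (Nat.floor_le (by positivity))
  have hm' : |z| < (m + 1) * q := (div_lt_iff₀ hq).1 (Nat.lt_floor_add_one _)
  unfold quasiconvexPAR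
  split_ifs
  · exact ⟨m, max_le (by linarith) le_rfl⟩
  · exact ⟨m + 1, by push_cast; exact max_le le_rfl (by linarith)⟩

end QuasiconvexPAR

section ProxObjective

variable {lam a s : ℝ}

noncomputable def proxObjective (lam a s t : ℝ) : ℝ := lam * max a (t - a) + 1 / 2 * (t - s) ^ 2

lemma mul_le_proxObjective (hlam : 0 ≤ lam) {b : ℝ} (hb : b ≤ a) (t : ℝ) :
    lam * b ≤ proxObjective lam a s t := by
  have := mul_le_mul_of_nonneg_left (hb.trans (le_max_left a (t - a))) hlam
  unfold proxObjective
  nlinarith [sq_nonneg (t - s)]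

lemma sub_le_proxObjective (hlam : 0 ≤ lam) {b : ℝ} (hb : a ≤ b) (t : ℝ) :
    lam * (s - b) - lam ^ 2 / 2 ≤ proxObjective lam a s t := by
  have := mul_le_mul_of_nonneg_left (le_max_right a (t - a)) hlam
  unfold proxObjective
  nlinarith [sq_nonneg (t - s + lam)]

/-- On `[2a, 2a + λ]` the minimizer of `proxObjective lam a s` is the kink `2a`. -/
lemma kink_le_proxObjective (h₁ : 2 * a ≤ s) (h₂ : s ≤ 2 * a + lam) (t : ℝ) :
    lam * a + 1 / 2 * (s - 2 * a) ^ 2 ≤ proxObjective lam a s t := by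
  unfold proxObjective
  rcases le_total t (2 * a) with ht | ht
  · rw [max_eq_left (by linarith)]
    nlinarith
  · rw [max_eq_right (by linarith)]
    nlinarith [mul_nonneg (sub_nonneg.2 ht) (by linarith : 0 ≤ lam - (s - 2 * a) + (t - 2 * a) / 2)]

end ProxObjective

section Regimes

variable {q lam s : ℝ} {k : ℕ}

lemma sq_regime_le_proxObjective (hq : 0 < q) (hlam0 : 0 ≤ lam) (hlam : lam ≤ q)
    (h₁ : k * q ≤ s) (h₂ : s ≤ k * q + lam) (j : ℕ) (t : ℝ) :
    lam * (k * q / 2) + 1 / 2 * (s - k * q) ^ 2 ≤ proxObjective lam (j * q / 2) s t := by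
  rcases lt_trichotomy j k with hjk | rfl | hjk
  · have : (j : ℝ) + 1 ≤ k := by exact_mod_cast hjk
    refine le_trans ?_ (sub_le_proxObjective hlam0 (b := k * q / 2 - q / 2) (by nlinarith) t)
    nlinarith
  · refine le_trans (le_of_eq ?_) (kink_le_proxObjective (by linarith) (by linarith) t)
    ring
  · refine le_trans ?_ (mul_le_proxObjective hlam0 (b := (k + 1) * q / 2) ?_ t)
    · nlinarith
    · have : (k : ℝ) + 1 ≤ j := by exact_mod_cast hjk
      nlinarith

lemma linear_regime_le_proxObjective (hq : 0 < q) (hlam0 : 0 ≤ lam)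
    (h : s ≤ (2 * k + 1) * q / 2 + lam / 2) (j : ℕ) (t : ℝ) :
    lam * (s - k * q / 2) - lam ^ 2 / 2 ≤ proxObjective lam (j * q / 2) s t := by
  rcases le_or_gt j k with hjk | hjk
  · have : (j : ℝ) ≤ k := by exact_mod_cast hjk
    exact sub_le_proxObjective hlam0 (by nlinarith) t
  · refine le_trans ?_ (mul_le_proxObjective hlam0 (b := (k + 1) * q / 2) ?_ t)
    · nlinarith
    · have : (k : ℝ) + 1 ≤ j := by exact_mod_cast hjk
      nlinarith

lemma const_regime_le_proxObjective (hq : 0 < q) (hlam0 : 0 ≤ lam)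
    (h : (2 * k + 1) * q / 2 + lam / 2 ≤ s) (j : ℕ) (t : ℝ) :
    lam * ((k + 1) * q / 2) ≤ proxObjective lam (j * q / 2) s t := by
  rcases le_or_gt j k with hjk | hjk
  · have : (j : ℝ) ≤ k := by exact_mod_cast hjk
    refine le_trans ?_ (sub_le_proxObjective hlam0 (b := k * q / 2) (by nlinarith) t)
    nlinarith
  · have : (k : ℝ) + 1 ≤ j := by exact_mod_cast hjk
    exact mul_le_proxObjective hlam0 (by nlinarith) t

end Regimes

lemma abs_sign_mul_and_sub_sq {x c : ℝ} (hc : 0 ≤ c) (h₀ : x = 0 → c = 0) :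
    |Real.sign x * c| = c ∧ (Real.sign x * c - x) ^ 2 = (c - |x|) ^ 2 := by
  rcases lt_trichotomy x 0 with hx | hx | hx
  · rw [Real.sign_of_neg hx, abs_of_neg hx, neg_one_mul, abs_neg, abs_of_nonneg hc]
    exact ⟨rfl, by ring⟩
  · simp [hx, h₀ hx]
  · rw [Real.sign_of_pos hx, abs_of_pos hx, one_mul, abs_of_nonneg hc]
    exact ⟨rfl, rfl⟩

theorem prox_quasiconvex_par_small_lambda
    (q : ℝ) (hq : 0 < q) (lam : ℝ) (hlam0 : 0 < lam) (hlam : lam ≤ q) (x : ℝ)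
    (Φ : ℝ → ℝ)
    (hΦ : ∀ z, Φ z = lam * quasiconvexPAR q z + (1 / 2) * (z - x) ^ 2) :
    ∀ k : ℕ,
      -- (i)
      (((k : ℝ) * q ≤ |x| → |x| ≤ (k : ℝ) * q + lam →
        ∀ z : ℝ, Φ (Real.sign x * ((k : ℝ) * q)) ≤ Φ z)) ∧
      -- (ii)
      (((k : ℝ) * q + lam ≤ |x| → |x| ≤ (2 * (k : ℝ) + 1) * q / 2 + lam / 2 →
        ∀ z : ℝ, Φ (Real.sign x * (|x| - lam)) ≤ Φ z)) ∧
      -- (iii)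
      (((2 * (k : ℝ) + 1) * q / 2 + lam / 2 ≤ |x| → |x| ≤ ((k : ℝ) + 1) * q →
        ∀ z : ℝ, Φ x ≤ Φ z)) := by
  have hlow : ∀ z, ∃ j : ℕ, proxObjective lam (j * q / 2) |x| |z| ≤ Φ z := fun z ↦ by
    obtain ⟨j, hj⟩ := exists_max_le_quasiconvexPAR hq z
    have hsq := sq_le_sq.2 (abs_abs_sub_abs_le_abs_sub z x)
    refine ⟨j, ?_⟩
    rw [hΦ, proxObjective]
    linarith [mul_le_mul_of_nonneg_left hj hlam0.le]
  intro k
  have hkq : 0 ≤ (k : ℝ) * q := by positivity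
  refine ⟨fun h₁ h₂ z ↦ ?_, fun h₁ h₂ z ↦ ?_, fun h₁ h₂ z ↦ ?_⟩ <;> obtain ⟨j, hj⟩ := hlow z
  · obtain ⟨habs, hsq⟩ := abs_sign_mul_and_sub_sq (x := x) hkq fun hx ↦ by simp [hx] at h₁; linarith
    calc Φ (Real.sign x * (k * q)) = lam * (k * q / 2) + 1 / 2 * (|x| - k * q) ^ 2 := by
          rw [hΦ, hsq, quasiconvexPAR_eq_abs_sub hq habs.ge (by linarith), habs]; ring
      _ ≤ Φ z := (sq_regime_le_proxObjective hq hlam0.le hlam h₁ h₂ j |z|).trans hj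
  · obtain ⟨habs, hsq⟩ := abs_sign_mul_and_sub_sq (x := x) (c := |x| - lam) (by linarith)
      fun hx ↦ by simp [hx] at h₁; linarith
    calc Φ (Real.sign x * (|x| - lam)) = lam * (|x| - k * q / 2) - lam ^ 2 / 2 := by
          rw [hΦ, hsq, quasiconvexPAR_eq_abs_sub hq (by linarith) (by linarith), habs]; ring
      _ ≤ Φ z := (linear_regime_le_proxObjective hq hlam0.le h₂ j |z|).trans hj
  · calc Φ x = lam * ((k + 1) * q / 2) := by
          rw [hΦ, quasiconvexPAR_eq_const hq (by linarith) h₂]; ring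
      _ ≤ Φ z := (const_regime_le_proxObjective hq hlam0.le h₁ j |z|).trans hj
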